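/- If c₁ ≥ −8M³Ĥ (equivalently 2MĤ + c₁/(4M²) ≥ 0), then the Brown–York mass of the spheres of symmetry on the exterior CMC slice has the horizon limit lim_{r→2M⁺} m_BY(r) = 2M·(1 − 2MĤ − c₁/(4M²)). -/

import Mathlib

open Real Filter Topology Set

/-- Schwarzschild lapse-type function `f(r) = 1 - 2M/r`. -/
noncomputable def f (M r : ℝ) : ℝ := 1 - 2 * M / r

/-- `P(r) = Ĥ·r + c₁/r²`. -/
noncomputable def P (H c1 r : ℝ) : ℝ := H * r + c1 / r ^ 2

/-- Slope of the height function of the exterior CMC slice: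
`h'(r) = P(r)/(f(r)·√(f(r) + P(r)²))`. -/
noncomputable def h' (M H c1 r : ℝ) : ℝ :=
  P H c1 r / (f M r * Real.sqrt (f M r + (P H c1 r) ^ 2))

/-- Hawking mass `m_H(r) = (r/2)(1 − (f⁻¹ − f h'²)⁻¹)`. -/
noncomputable def mH (M H c1 r : ℝ) : ℝ :=
  r / 2 * (1 - ((f M r)⁻¹ - f M r * (h' M H c1 r) ^ 2)⁻¹)

/-- Brown–York mass `m_BY(r) = r(1 − (f⁻¹ − f h'²)^(−1/2))`. -/
noncomputable def mBY (M H c1 r : ℝ) : ℝ :=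
  r * (1 - ((f M r)⁻¹ - f M r * (h' M H c1 r) ^ 2) ^ (-(1 : ℝ) / 2))

/-- Liu–Yau mass `m_LY(r) = r(1 − (1 − f² h'²)^(1/2)·(f⁻¹ − f h'²)^(−1/2))`. -/
noncomputable def mLY (M H c1 r : ℝ) : ℝ :=
  r * (1 - (1 - (f M r) ^ 2 * (h' M H c1 r) ^ 2) ^ ((1 : ℝ) / 2) *
    ((f M r)⁻¹ - f M r * (h' M H c1 r) ^ 2) ^ (-(1 : ℝ) / 2))

/-- Spacetime Hawking mass `m_H^st(r) = (r/2)(1 − (1 − f² h'²)(f⁻¹ − f h'²)⁻¹)`. -/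
noncomputable def mHst (M H c1 r : ℝ) : ℝ :=
  r / 2 * (1 - (1 - (f M r) ^ 2 * (h' M H c1 r) ^ 2) *
    ((f M r)⁻¹ - f M r * (h' M H c1 r) ^ 2)⁻¹)

/-! On the exterior CMC slice the metric coefficient `f⁻¹ - f h'²` equals `(f + P²)⁻¹`, so
`m_BY(r) = r (1 - √(f + P²))`. This closed form is continuous up to the horizon `r = 2M`,
where `f` vanishes and the square root becomes `|P(2M)| = 2MĤ + c₁/(4M²)`, which is nonnegative
exactly under the hypothesis `c₁ ≥ -8M³Ĥ`. -/

lemma inv_sub_mul_sq_div_mul_sqrt {a p : ℝ} (ha : a ≠ 0) (hap : 0 < a + p ^ 2) :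
    a⁻¹ - a * (p / (a * √(a + p ^ 2))) ^ 2 = (a + p ^ 2)⁻¹ := by
  rw [div_pow, mul_pow, Real.sq_sqrt hap.le]
  field_simp
  ring

lemma Real.inv_rpow_neg_half {x : ℝ} (hx : 0 ≤ x) : x⁻¹ ^ (-(1 : ℝ) / 2) = √x := by
  rw [neg_div, Real.rpow_neg (inv_nonneg.mpr hx), Real.inv_rpow hx, inv_inv,
    Real.sqrt_eq_rpow]

lemma f_pos {M r : ℝ} (hr : 2 * M < r) (hr₀ : 0 < r) : 0 < f M r := by
  rw [f, sub_pos, div_lt_one hr₀]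
  exact hr

lemma f_two_mul_self {M : ℝ} (hM : M ≠ 0) : f M (2 * M) = 0 := by
  rw [f, div_self (mul_ne_zero two_ne_zero hM), sub_self]

lemma P_two_mul {M : ℝ} (H c1 : ℝ) (hM : M ≠ 0) :
    P H c1 (2 * M) = (8 * M ^ 3 * H + c1) / (4 * M ^ 2) := by
  rw [P]
  field_simp
  ring

lemma mBY_eq_mul_one_sub_sqrt {M : ℝ} (H c1 : ℝ) (hM : 0 < M) {r : ℝ} (hr : 2 * M < r) :
    mBY M H c1 r = r * (1 - √(f M r + P H c1 r ^ 2)) := by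
  have hf : 0 < f M r := f_pos hr (by linarith)
  have hfP : 0 < f M r + P H c1 r ^ 2 := by positivity
  rw [mBY, h', inv_sub_mul_sq_div_mul_sqrt hf.ne' hfP, Real.inv_rpow_neg_half hfP.le]

lemma continuousAt_mul_one_sub_sqrt_f_add_P_sq (M H c1 : ℝ) {r₀ : ℝ} (hr₀ : r₀ ≠ 0) :
    ContinuousAt (fun r => r * (1 - √(f M r + P H c1 r ^ 2))) r₀ := by
  unfold f P
  fun_prop (disch := positivity)

/-- If `c₁ ≥ −8M³Ĥ` (equivalently `2MĤ + c₁/(4M²) ≥ 0`), then the Brown–York mass of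
the spheres of symmetry on the exterior CMC slice has the horizon limit
`lim_{r→2M⁺} m_BY(r) = 2M(1 − 2MĤ − c₁/(4M²))`. -/
theorem brown_york_horizon_limit (M H c1 : ℝ) (hM : 0 < M)
    (hc : -8 * M ^ 3 * H ≤ c1) :
    Tendsto (mBY M H c1) (𝓝[>] (2 * M))
      (𝓝 (2 * M * (1 - 2 * M * H - c1 / (4 * M ^ 2)))) := by
  have hP : 0 ≤ P H c1 (2 * M) := by
    rw [P_two_mul H c1 hM.ne']
    exact div_nonneg (by linarith) (by positivity)
  have hlimit : 2 * M * (1 - √(f M (2 * M) + P H c1 (2 * M) ^ 2)) =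
      2 * M * (1 - 2 * M * H - c1 / (4 * M ^ 2)) := by
    rw [f_two_mul_self hM.ne', zero_add, Real.sqrt_sq hP, P]
    field_simp
    ring
  have hcont :=
    (continuousAt_mul_one_sub_sqrt_f_add_P_sq M H c1 (r₀ := 2 * M) (by positivity)).tendsto
  rw [hlimit] at hcont
  exact (hcont.mono_left nhdsWithin_le_nhds).congr'
    (eventually_nhdsWithin_of_forall fun r hr => (mBY_eq_mul_one_sub_sqrt H c1 hM hr).symm)
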